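/- arXiv:2511.05963 — 2 statements merged into one kernel-verified Lean document; each statement's English description precedes it below -/
import Mathlib

section
/- Suppose next-token consistency holds at every time t with 1 ≤ t ≤ T−1 and transition consistency holds at every time t with 1 ≤ t ≤ T−2. Then for every t with 1 ≤ t ≤ T−1, the hidden state h_t is a belief state for X_{1:t}. -/
open MeasureTheory ProbabilityTheory

noncomputable section

/-- The tuple of tokens `(X_{s+1}, …, X_{s+n})`. -/
def tup {Ω 𝒳 : Type*} (X : ℕ → Ω → 𝒳) (s n : ℕ) (ω : Ω) : Fin n → 𝒳 :=
  fun i => X (s + 1 + (i : ℕ)) ω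

/-- Real-valued indicator of a set. -/
def ind {Ω : Type*} (A : Set Ω) : Ω → ℝ := A.indicator 1

/-!
`h t` is a belief state exactly when `E[F | X_{1:t}]` is a.e. a function of `h t` for every
function `F` of the future tokens, and this is proved by backward induction on `t`. Split
`F(X_{t+1:T})` according to the value `a` of `X_{t+1}`. By induction `E[F_a(X_{t+2:T}) | X_{1:t+1}]`
is a function of `h (t+1)`, hence, by transition consistency, of `(h t, X_{t+1})`, say
`ψ (h t, X_{t+1})`. On `{X_{t+1} = a}` this is `ψ (h t, a)`, so
`E[1{X_{t+1} = a} F_a | X_{1:t}] = ψ (h t, a) P(X_{t+1} = a | X_{1:t})`, and next-token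
consistency replaces the last factor by `P(X_{t+1} = a | h t)`.
-/

open Filter

section CondExp

variable {Ω : Type*} {m₀ : MeasurableSpace Ω} {μ : Measure Ω}

theorem condExp_ae_eq_condExp_of_aestronglyMeasurable {E : Type*} [NormedAddCommGroup E]
    [NormedSpace ℝ E] [CompleteSpace E] [IsFiniteMeasure μ] {m₁ m₂ : MeasurableSpace Ω}
    {f : Ω → E} (h₁₂ : m₁ ≤ m₂) (h₂ : m₂ ≤ m₀)
    (hf : AEStronglyMeasurable[m₁] (μ[f|m₂]) μ) : μ[f|m₁] =ᵐ[μ] μ[f|m₂] :=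
  (condExp_condExp_of_le h₁₂ h₂).symm.trans
    (condExp_of_aestronglyMeasurable' (h₁₂.trans h₂) hf integrable_condExp)

theorem aestronglyMeasurable_finsetSum {M ι : Type*} [AddCommMonoid M] [TopologicalSpace M]
    [ContinuousAdd M] {m : MeasurableSpace Ω} (s : Finset ι) {f : ι → Ω → M}
    (hf : ∀ i ∈ s, AEStronglyMeasurable[m] (f i) μ) :
    AEStronglyMeasurable[m] (∑ i ∈ s, f i) μ := by
  classical
  induction s using Finset.induction_on with
  | empty => exact aestronglyMeasurable_zero
  | insert i s hi ih =>
    rw [Finset.sum_insert hi]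
    exact (hf i (s.mem_insert_self i)).add (ih fun j hj => hf j (Finset.mem_insert_of_mem hj))

theorem aestronglyMeasurable_of_forall_indicator {m m' : MeasurableSpace Ω} {f : Ω → ℝ}
    (hind : ∀ s, MeasurableSet[m'] s → AEStronglyMeasurable[m] (s.indicator (1 : Ω → ℝ)) μ)
    (hf : StronglyMeasurable[m'] f) : AEStronglyMeasurable[m] f μ := by
  induction f, hf using @StronglyMeasurable.induction _ _ m' with
  | @ind c s hs =>
    have : (s.indicator fun _ => c) = c • s.indicator (1 : Ω → ℝ) := by
      ext ω; by_cases hω : ω ∈ s <;> simp [hω]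
    rw [this]
    exact (hind s hs).const_smul c
  | add _ _ _ _ hf hg => exact hf.add hg
  | @lim fs F _ _ hfs hlim =>
    choose g hg hfg using hfs
    let _ : MeasurableSpace Ω := m
    refine ⟨fun ω => limUnder atTop (g · ω), StronglyMeasurable.limUnder hg, ?_⟩
    filter_upwards [ae_all_iff.2 hfg] with ω hω
    exact ((hlim ω).congr hω).limUnder_eq.symm

end CondExp

section Consistency

variable {Ω H 𝒳 : Type*} {m₀ : MeasurableSpace Ω} [MeasurableSpace H] [MeasurableSpace 𝒳]
  {μ : Measure Ω} [IsFiniteMeasure μ]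

theorem AEStronglyMeasurable.of_comap_of_condExp_ind_ae_eq {m 𝓕 : MeasurableSpace Ω}
    {η : Ω → H} (hη : MeasurableSpace.comap η inferInstance ≤ 𝓕) (h𝓕 : 𝓕 ≤ m₀)
    (hcons : ∀ B : Set H, MeasurableSet B →
      μ[ind {ω | η ω ∈ B}|m] =ᵐ[μ] μ[ind {ω | η ω ∈ B}|𝓕])
    {F : Ω → ℝ} (hF : AEStronglyMeasurable[MeasurableSpace.comap η inferInstance] F μ) :
    AEStronglyMeasurable[m] F μ := by
  obtain ⟨Φ, hΦ, hFΦ⟩ := hF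
  refine (aestronglyMeasurable_of_forall_indicator (fun s hs => ?_) hΦ).congr hFΦ.symm
  obtain ⟨B, hB, rfl⟩ := hs
  have hind : StronglyMeasurable[𝓕] (ind {ω | η ω ∈ B}) :=
    stronglyMeasurable_const.indicator (hη _ ⟨B, hB, rfl⟩)
  have hint : Integrable (ind {ω | η ω ∈ B}) μ :=
    (integrable_const 1).indicator (h𝓕 _ (hη _ ⟨B, hB, rfl⟩))
  have h := hcons B hB
  rw [condExp_of_stronglyMeasurable h𝓕 hind hint] at h
  exact ⟨μ[ind {ω | η ω ∈ B}|m], stronglyMeasurable_condExp, h.symm⟩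

theorem aestronglyMeasurable_condExp_ind_mul [MeasurableSingletonClass 𝒳]
    {𝓕 𝓕' : MeasurableSpace Ω} (h𝓕 : 𝓕 ≤ 𝓕') (h𝓕' : 𝓕' ≤ m₀) {η : Ω → H} {ξ : Ω → 𝒳}
    (hη : MeasurableSpace.comap η inferInstance ≤ 𝓕) (hξ : Measurable[𝓕'] ξ) {G : Ω → ℝ}
    (hG : Integrable G μ)
    (hGηξ : AEStronglyMeasurable[MeasurableSpace.comap (fun ω => (η ω, ξ ω)) inferInstance]
      (μ[G|𝓕']) μ)
    (a : 𝒳) (hnext : μ[ind {ω | ξ ω = a}|MeasurableSpace.comap η inferInstance] =ᵐ[μ]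
      μ[ind {ω | ξ ω = a}|𝓕]) :
    AEStronglyMeasurable[MeasurableSpace.comap η inferInstance]
      (μ[ind {ω | ξ ω = a} * G|𝓕]) μ := by
  obtain ⟨Φ, hΦ, hGΦ⟩ := hGηξ
  obtain ⟨ψ, hψ, rfl⟩ := hΦ.exists_eq_measurable_comp
  set Y := ind {ω | ξ ω = a}
  set Ψ : Ω → ℝ := fun ω => ψ (η ω, a)
  have hY : StronglyMeasurable[𝓕'] Y :=
    stronglyMeasurable_const.indicator (hξ (measurableSet_singleton a))
  have hY_int : Integrable Y μ :=
    (integrable_const 1).indicator (h𝓕' _ (hξ (measurableSet_singleton a)))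
  have hY_le : ∀ ω, ‖Y ω‖ ≤ 1 := fun ω => by
    by_cases h : ξ ω = a <;> simp [Y, ind, h]
  have hΨ : StronglyMeasurable[MeasurableSpace.comap η inferInstance] Ψ :=
    hψ.comp_measurable ((comap_measurable η).prodMk measurable_const)
  have hYΨ : Y * μ[G|𝓕'] =ᵐ[μ] Ψ * Y := by
    filter_upwards [hGΦ] with ω hω
    by_cases h : ξ ω = a <;> simp [Y, Ψ, ind, h, hω]
  have hYG_int : Integrable (Y * μ[G|𝓕']) μ :=
    integrable_condExp.bdd_mul (hY.mono h𝓕').aestronglyMeasurable (ae_of_all _ hY_le)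
  refine ⟨Ψ * μ[Y|MeasurableSpace.comap η inferInstance], hΨ.mul stronglyMeasurable_condExp, ?_⟩
  calc μ[Y * G|𝓕] =ᵐ[μ] μ[μ[Y * G|𝓕']|𝓕] := (condExp_condExp_of_le h𝓕 h𝓕').symm
    _ =ᵐ[μ] μ[Y * μ[G|𝓕']|𝓕] := condExp_congr_ae
        (condExp_mul_of_stronglyMeasurable_left hY
          (hG.bdd_mul (hY.mono h𝓕').aestronglyMeasurable (ae_of_all _ hY_le)) hG)
    _ =ᵐ[μ] μ[Ψ * Y|𝓕] := condExp_congr_ae hYΨ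
    _ =ᵐ[μ] Ψ * μ[Y|𝓕] := condExp_mul_of_stronglyMeasurable_left (hΨ.mono hη)
        (hYG_int.congr hYΨ) hY_int
    _ =ᵐ[μ] Ψ * μ[Y|MeasurableSpace.comap η inferInstance] :=
        (EventuallyEq.refl _ Ψ).mul hnext.symm

end Consistency

section Tuples

variable {Ω 𝒳 : Type*} {X : ℕ → Ω → 𝒳}

theorem ind_mul_eq_indicator (A : Set Ω) (G : Ω → ℝ) : ind A * G = A.indicator G := by
  ext ω; by_cases hω : ω ∈ A <;> simp [ind, hω]

theorem measurable_tup [MeasurableSpace Ω] [MeasurableSpace 𝒳] (hX : ∀ t, Measurable (X t))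
    (s n : ℕ) : Measurable (tup X s n) :=
  measurable_pi_lambda _ fun _ => hX _

theorem comap_tup_le_comap_tup_succ [MeasurableSpace 𝒳] (t : ℕ) :
    MeasurableSpace.comap (tup X 0 t) inferInstance ≤
      MeasurableSpace.comap (tup X 0 (t + 1)) inferInstance :=
  measurable_iff_comap_le.1 <|
    (measurable_pi_lambda (fun (y : Fin (t + 1) → 𝒳) (i : Fin t) => y i.castSucc)
      fun _ => measurable_pi_apply _).comp (comap_measurable (tup X 0 (t + 1)))

theorem measurable_comap_tup_succ [MeasurableSpace 𝒳] (t : ℕ) :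
    Measurable[MeasurableSpace.comap (tup X 0 (t + 1)) inferInstance] (X (t + 1)) := by
  have hX : X (t + 1) = fun ω => tup X 0 (t + 1) ω (Fin.last t) := by
    funext ω; simp [tup, add_comm]
  rw [hX]
  exact (measurable_pi_apply (Fin.last t)).comp (comap_measurable (tup X 0 (t + 1)))

theorem tup_succ (s n : ℕ) (ω : Ω) :
    tup X s (n + 1) ω = Fin.cons (X (s + 1) ω) (tup X (s + 1) n ω) := by
  funext i
  refine Fin.cases ?_ (fun j => ?_) i
  · simp [tup]
  · simp only [tup, Fin.cons_succ, Fin.val_succ]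
    congr 1
    omega

theorem tup_zero (s : ℕ) (ω : Ω) : tup X s 0 ω = Fin.elim0 :=
  Subsingleton.elim _ _

theorem comp_tup_succ_eq_sum [Fintype 𝒳] {n : ℕ} (f : (Fin (n + 1) → 𝒳) → ℝ) (s : ℕ) :
    (fun ω => f (tup X s (n + 1) ω)) =
      ∑ a : 𝒳, ind {ω | X (s + 1) ω = a} * fun ω => f (Fin.cons a (tup X (s + 1) n ω)) := by
  funext ω
  classical
  simp [tup_succ, ind, Set.indicator_apply]

theorem integrable_comp_tup [MeasurableSpace Ω] [MeasurableSpace 𝒳] [Finite 𝒳]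
    [MeasurableSingletonClass 𝒳] {μ : Measure Ω} [IsFiniteMeasure μ] (hX : ∀ t, Measurable (X t))
    {n : ℕ} (f : (Fin n → 𝒳) → ℝ) (s : ℕ) :
    Integrable (fun ω => f (tup X s n ω)) μ :=
  Integrable.of_finite.comp_measurable (measurable_tup hX s n)

end Tuples

theorem aestronglyMeasurable_condExp_comp_tup {Ω 𝒳 H : Type*} [MeasurableSpace Ω]
    [MeasurableSpace 𝒳] [MeasurableSingletonClass 𝒳] [Fintype 𝒳] [MeasurableSpace H]
    {μ : Measure Ω} [IsFiniteMeasure μ] {T : ℕ} {X : ℕ → Ω → 𝒳} (hX : ∀ t, Measurable (X t))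
    {h : ℕ → Ω → H}
    (hh : ∀ t, 1 ≤ t → t ≤ T →
      MeasurableSpace.comap (h t) inferInstance ≤ MeasurableSpace.comap (tup X 0 t) inferInstance)
    (hnext : ∀ t, 1 ≤ t → t ≤ T - 1 → ∀ a : 𝒳,
      (μ[ind {ω | X (t + 1) ω = a} | MeasurableSpace.comap (h t) inferInstance])
        =ᵐ[μ]
      (μ[ind {ω | X (t + 1) ω = a} | MeasurableSpace.comap (tup X 0 t) inferInstance]))
    (htrans : ∀ t, 1 ≤ t → t ≤ T - 2 → ∀ B : Set H, MeasurableSet B →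
      (μ[ind {ω | h (t + 1) ω ∈ B} |
          MeasurableSpace.comap (fun ω => (h t ω, X (t + 1) ω)) inferInstance])
        =ᵐ[μ]
      (μ[ind {ω | h (t + 1) ω ∈ B} |
          MeasurableSpace.comap (tup X 0 (t + 1)) inferInstance]))
    (n t : ℕ) (ht : 1 ≤ t) (hn : t + n = T) (f : (Fin n → 𝒳) → ℝ) :
    AEStronglyMeasurable[MeasurableSpace.comap (h t) inferInstance]
      (μ[fun ω => f (tup X t n ω)|MeasurableSpace.comap (tup X 0 t) inferInstance]) μ := by
  induction n generalizing t with
  | zero =>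
    simp only [tup_zero]
    rw [condExp_const (measurable_tup hX 0 t).comap_le]
    exact aestronglyMeasurable_const
  | succ n ih =>
    have hint : ∀ a, Integrable
        (ind {ω | X (t + 1) ω = a} * fun ω => f (Fin.cons a (tup X (t + 1) n ω))) μ := by
      intro a
      rw [ind_mul_eq_indicator]
      exact (integrable_comp_tup hX (fun y => f (Fin.cons a y)) (t + 1)).indicator
        (measurableSet_eq_fun (hX _) measurable_const)
    rw [comp_tup_succ_eq_sum]
    refine (aestronglyMeasurable_finsetSum _ fun a _ => ?_).congr
      (condExp_finsetSum (fun a _ => hint a) _).symm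
    refine aestronglyMeasurable_condExp_ind_mul (comap_tup_le_comap_tup_succ t)
      (measurable_tup hX 0 (t + 1)).comap_le (hh t ht (by omega)) (measurable_comap_tup_succ t)
      (integrable_comp_tup hX (fun y => f (Fin.cons a y)) (t + 1)) ?_ a (hnext t ht (by omega) a)
    rcases n with _ | n
    · simp only [tup_zero]
      rw [condExp_const (measurable_tup hX 0 (t + 1)).comap_le]
      exact aestronglyMeasurable_const
    · exact AEStronglyMeasurable.of_comap_of_condExp_ind_ae_eq (hh (t + 1) (by omega)
        (by omega)) (measurable_tup hX 0 (t + 1)).comap_le (htrans t ht (by omega))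
        (ih (t + 1) (by omega) (by omega) fun y => f (Fin.cons a y))

theorem nextlat_yields_belief_states_general
    {Ω 𝒳 H : Type*}
    [MeasurableSpace Ω] [MeasurableSpace 𝒳] [DiscreteMeasurableSpace 𝒳]
    [Fintype 𝒳]
    [MeasurableSpace H]
    (μ : Measure Ω) [IsProbabilityMeasure μ]
    (T : ℕ)
    (X : ℕ → Ω → 𝒳) (hX : ∀ t, Measurable (X t))
    (h : ℕ → Ω → H) (g : (t : ℕ) → (Fin t → 𝒳) → H)
    (hg : ∀ t, 1 ≤ t → t ≤ T → Measurable (g t))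
    (hgh : ∀ t, 1 ≤ t → t ≤ T → ∀ ω, h t ω = g t (tup X 0 t ω))
    -- next-token consistency at every time `1 ≤ t ≤ T-1`
    (hnext : ∀ t, 1 ≤ t → t ≤ T - 1 → ∀ a : 𝒳,
      (μ[ind {ω | X (t + 1) ω = a} | MeasurableSpace.comap (h t) inferInstance])
        =ᵐ[μ]
      (μ[ind {ω | X (t + 1) ω = a} | MeasurableSpace.comap (tup X 0 t) inferInstance]))
    -- transition consistency at every time `1 ≤ t ≤ T-2`
    (htrans : ∀ t, 1 ≤ t → t ≤ T - 2 → ∀ B : Set H, MeasurableSet B →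
      (μ[ind {ω | h (t + 1) ω ∈ B} |
          MeasurableSpace.comap (fun ω => (h t ω, X (t + 1) ω)) inferInstance])
        =ᵐ[μ]
      (μ[ind {ω | h (t + 1) ω ∈ B} |
          MeasurableSpace.comap (tup X 0 (t + 1)) inferInstance])) :
    -- conclusion: `h t` is a belief state for `X_{1:t}` for every `1 ≤ t ≤ T-1`
    ∀ t, 1 ≤ t → t ≤ T - 1 →
      ∀ f : (Fin (T - t) → 𝒳) → ℝ, Measurable f → (∃ C, ∀ y, |f y| ≤ C) →
        (μ[fun ω => f (tup X t (T - t) ω) | MeasurableSpace.comap (h t) inferInstance])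
          =ᵐ[μ]
        (μ[fun ω => f (tup X t (T - t) ω) |
            MeasurableSpace.comap (tup X 0 t) inferInstance]) := by
  intro t ht₁ ht₂ f _ _
  have hh : ∀ t, 1 ≤ t → t ≤ T →
      MeasurableSpace.comap (h t) inferInstance ≤
        MeasurableSpace.comap (tup X 0 t) inferInstance := fun t h₁ h₂ =>
    measurable_iff_comap_le.1 <| by
      rw [funext (hgh t h₁ h₂)]
      exact (hg t h₁ h₂).comp (comap_measurable _)
  exact condExp_ae_eq_condExp_of_aestronglyMeasurable (hh t ht₁ (by omega))
    (measurable_tup hX 0 t).comap_le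
    (aestronglyMeasurable_condExp_comp_tup hX hh hnext htrans (T - t) t ht₁ (by omega) f)

/-- If next-token consistency holds at every time `1 ≤ t ≤ T-1` and
transition consistency holds at every time `1 ≤ t ≤ T-2`, then for every `1 ≤ t ≤ T-1`
the hidden state `h t` is a belief state for `X_{1:t}`. -/
theorem nextlat_yields_belief_states
    {Ω 𝒳 H : Type*}
    [MeasurableSpace Ω] [MeasurableSpace 𝒳] [DiscreteMeasurableSpace 𝒳]
    [Fintype 𝒳] [Nonempty 𝒳]
    [MeasurableSpace H] [StandardBorelSpace H]
    (μ : Measure Ω) [IsProbabilityMeasure μ]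
    (T : ℕ) (hT : 2 ≤ T)
    (X : ℕ → Ω → 𝒳) (hX : ∀ t, Measurable (X t))
    (h : ℕ → Ω → H) (g : (t : ℕ) → (Fin t → 𝒳) → H)
    (hg : ∀ t, 1 ≤ t → t ≤ T → Measurable (g t))
    (hgh : ∀ t, 1 ≤ t → t ≤ T → ∀ ω, h t ω = g t (tup X 0 t ω))
    -- next-token consistency at every time `1 ≤ t ≤ T-1`
    (hnext : ∀ t, 1 ≤ t → t ≤ T - 1 → ∀ a : 𝒳,
      (μ[ind {ω | X (t + 1) ω = a} | MeasurableSpace.comap (h t) inferInstance])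
        =ᵐ[μ]
      (μ[ind {ω | X (t + 1) ω = a} | MeasurableSpace.comap (tup X 0 t) inferInstance]))
    -- transition consistency at every time `1 ≤ t ≤ T-2`
    (htrans : ∀ t, 1 ≤ t → t ≤ T - 2 → ∀ B : Set H, MeasurableSet B →
      (μ[ind {ω | h (t + 1) ω ∈ B} |
          MeasurableSpace.comap (fun ω => (h t ω, X (t + 1) ω)) inferInstance])
        =ᵐ[μ]
      (μ[ind {ω | h (t + 1) ω ∈ B} |
          MeasurableSpace.comap (tup X 0 (t + 1)) inferInstance])) :
    -- conclusion: `h t` is a belief state for `X_{1:t}` for every `1 ≤ t ≤ T-1`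
    ∀ t, 1 ≤ t → t ≤ T - 1 →
      ∀ f : (Fin (T - t) → 𝒳) → ℝ, Measurable f → (∃ C, ∀ y, |f y| ≤ C) →
        (μ[fun ω => f (tup X t (T - t) ω) | MeasurableSpace.comap (h t) inferInstance])
          =ᵐ[μ]
        (μ[fun ω => f (tup X t (T - t) ω) |
            MeasurableSpace.comap (tup X 0 t) inferInstance]) :=
  nextlat_yields_belief_states_general μ T X hX h g hg hgh hnext htrans
end
end

section
/- Let k ≥ 1 and let t satisfy 1 ≤ t and t + k ≤ T. Assume the system is k-observable at time t, and assume that for every w ∈ 𝒳^k, μ[X_{t+1:t+k} = w ∣ σ(h_t)] = μ[X_{t+1:t+k} = w ∣ σ(X_{1:t})] μ-almost surely (i.e., the model conditioned on h_t recovers the true joint conditional distribution of the next k tokens). Then h_t is a belief state for X_{1:t}. -/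
/-!
On each non-null atom `{X_{1:t} = x}`, the conditional expectation given the finite-valued
`X_{1:t}` is the average under `μ[|X_{1:t} = x]`. A `σ(h_t)`-measurable version of the next-`k`
conditional law is constant on the fibres of `h_t = g_t(X_{1:t})`, so two non-null atoms with the
same hidden state carry the same next-`k` law, hence, by `k`-observability, the same law of
`X_{t+1:T}`. Therefore `E[f(X_{t+1:T}) | X_{1:t}]` has a `σ(h_t)`-measurable version, and as
`σ(h_t) ⊆ σ(X_{1:t})` the tower property identifies it with `E[f(X_{t+1:T}) | h_t]`.
-/

open MeasureTheory ProbabilityTheory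

noncomputable section

lemma condExp_ae_eq_condExp_of_le {Ω E : Type*} [NormedAddCommGroup E] [NormedSpace ℝ E]
    [CompleteSpace E] {m₁ m₂ m₀ : MeasurableSpace Ω} {μ : Measure[m₀] Ω} [IsFiniteMeasure μ]
    {F : Ω → E} (h₁₂ : m₁ ≤ m₂) (h₂ : m₂ ≤ m₀) (hF : AEStronglyMeasurable[m₁] (μ[F | m₂]) μ) :
    μ[F | m₁] =ᵐ[μ] μ[F | m₂] :=
  (condExp_condExp_of_le h₁₂ h₂).symm.trans
    (condExp_of_aestronglyMeasurable' (h₁₂.trans h₂) hF integrable_condExp)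

lemma measurable_comap_comp_of_finite_range {Ω H β : Type*} [MeasurableSpace H]
    [MeasurableSingletonClass H] [MeasurableSpace β] {u : Ω → H} (hu : (Set.range u).Finite)
    (ψ : H → β) : Measurable[MeasurableSpace.comap u inferInstance] (ψ ∘ u) := by
  intro C _
  refine ⟨ψ ⁻¹' C ∩ Set.range u, (hu.subset Set.inter_subset_right).measurableSet, ?_⟩
  ext ω
  simp

lemma measureReal_smul_integral_cond {Ω E : Type*} [MeasurableSpace Ω] [NormedAddCommGroup E]
    [NormedSpace ℝ E] (μ : Measure Ω) [IsFiniteMeasure μ] (s : Set Ω) (F : Ω → E) :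
    μ.real s • ∫ ω, F ω ∂μ[|s] = ∫ ω in s, F ω ∂μ := by
  by_cases hs : μ s = 0
  · simp [Measure.real, hs, Measure.restrict_eq_zero.mpr hs]
  · rw [ProbabilityTheory.cond, integral_smul_measure, smul_smul, Measure.real,
      ← ENNReal.toReal_mul, ENNReal.mul_inv_cancel hs (measure_ne_top μ s), ENNReal.toReal_one,
      one_smul]

section CondExpFinite

variable {Ω S E : Type*} [MeasurableSpace Ω] {μ : Measure Ω} [NormedAddCommGroup E]
  [MeasurableSpace S] [DiscreteMeasurableSpace S] {Y : Ω → S}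

lemma ae_measure_preimage_singleton_ne_zero [Countable S] (hY : Measurable Y) :
    ∀ᵐ ω ∂μ, μ (Y ⁻¹' {Y ω}) ≠ 0 := by
  refine ae_of_ae_map (p := fun y => μ (Y ⁻¹' {y}) ≠ 0) hY.aemeasurable
    (ae_iff_of_countable.2 fun y hy => ?_)
  rwa [Measure.map_apply hY (measurableSet_singleton y)] at hy

lemma integrable_comp_of_finite [Finite S] [IsFiniteMeasure μ] (hY : Measurable Y) (f : S → E) :
    Integrable (f ∘ Y) μ :=
  (integrable_map_measure AEStronglyMeasurable.of_discrete hY.aemeasurable).mp .of_finite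

variable [NormedSpace ℝ E]

lemma integral_comp_eq_of_measure_preimage_singleton_eq [Countable S] {ν ν' : Measure Ω}
    (hY : Measurable Y) (h : ∀ y, ν (Y ⁻¹' {y}) = ν' (Y ⁻¹' {y})) (f : S → E) :
    ∫ ω, f (Y ω) ∂ν = ∫ ω, f (Y ω) ∂ν' := by
  have hmap : ν.map Y = ν'.map Y := Measure.ext_of_singleton fun y => by
    rw [Measure.map_apply hY (measurableSet_singleton y),
      Measure.map_apply hY (measurableSet_singleton y), h]
  rw [← integral_map hY.aemeasurable AEStronglyMeasurable.of_discrete, hmap,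
    integral_map hY.aemeasurable AEStronglyMeasurable.of_discrete]

lemma setIntegral_preimage_eq_sum [Finite S] (hY : Measurable Y) {G : Ω → E}
    (hG : Integrable G μ) (B : Set S) :
    ∫ ω in Y ⁻¹' B, G ω ∂μ = ∑ y ∈ B.toFinite.toFinset, ∫ ω in Y ⁻¹' {y}, G ω ∂μ := by
  have hB : Y ⁻¹' B = ⋃ y ∈ B.toFinite.toFinset, Y ⁻¹' {y} := by ext; simp
  rw [hB, integral_biUnion_finset _ (fun y _ => hY (measurableSet_singleton y))
    (Set.pairwiseDisjoint_fiber Y _) fun _ _ => hG.integrableOn]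

lemma condExp_comap_ae_eq_integral_cond [CompleteSpace E] [Finite S] [IsFiniteMeasure μ]
    (hY : Measurable Y) {F : Ω → E} (hF : Integrable F μ) :
    μ[F | MeasurableSpace.comap Y inferInstance] =ᵐ[μ] fun ω => ∫ ω', F ω' ∂μ[|Y ⁻¹' {Y ω}] := by
  set avg : S → E := fun y => ∫ ω', F ω' ∂μ[|Y ⁻¹' {y}]
  have hatom : ∀ y, ∫ ω in Y ⁻¹' {y}, avg (Y ω) ∂μ = ∫ ω in Y ⁻¹' {y}, F ω ∂μ := fun y => by
    rw [setIntegral_congr_fun (hY (measurableSet_singleton y)) fun ω (hω : Y ω = y) => by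
      rw [hω], setIntegral_const, measureReal_smul_integral_cond]
  refine (ae_eq_condExp_of_forall_setIntegral_eq hY.comap_le hF
    (fun _ _ _ => (integrable_comp_of_finite hY avg).integrableOn) ?_ ?_).symm
  · rintro _ ⟨B, -, rfl⟩ -
    rw [setIntegral_preimage_eq_sum hY (integrable_comp_of_finite hY avg),
      setIntegral_preimage_eq_sum hY hF]
    exact Finset.sum_congr rfl fun y _ => hatom y
  · exact (StronglyMeasurable.of_discrete.comp_measurable
      (comap_measurable Y)).aestronglyMeasurable

variable {H : Type*} [MeasurableSpace H]

lemma integral_cond_eq_of_condExp_comap_comp_ae_eq [CompleteSpace E] [Finite S]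
    [IsFiniteMeasure μ] (hY : Measurable Y) {φ : S → H} {F : Ω → E} (hF : Integrable F μ)
    (hcomp : μ[F | MeasurableSpace.comap (φ ∘ Y) inferInstance]
      =ᵐ[μ] μ[F | MeasurableSpace.comap Y inferInstance])
    {y y' : S} (hy : μ (Y ⁻¹' {y}) ≠ 0) (hy' : μ (Y ⁻¹' {y'}) ≠ 0) (hφ : φ y = φ y') :
    ∫ ω, F ω ∂μ[|Y ⁻¹' {y}] = ∫ ω, F ω ∂μ[|Y ⁻¹' {y'}] := by
  have hae := hcomp.trans (condExp_comap_ae_eq_integral_cond hY hF)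
  obtain ⟨ω, hωy : Y ω = y, hω⟩ :=
    Measure.exists_mem_of_measure_ne_zero_of_ae hy (ae_restrict_of_ae hae)
  obtain ⟨ω', hωy' : Y ω' = y', hω'⟩ :=
    Measure.exists_mem_of_measure_ne_zero_of_ae hy' (ae_restrict_of_ae hae)
  have hfiber := (stronglyMeasurable_condExp (m := MeasurableSpace.comap (φ ∘ Y) inferInstance)
    (f := F) (μ := μ)).factorsThrough (show φ (Y ω) = φ (Y ω') by rw [hωy, hωy', hφ])
  rw [← hωy, ← hωy']
  exact hω.symm.trans (hfiber.trans hω')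

lemma cond_eq_of_condExp_comap_comp_indicator_ae_eq [Finite S] [IsFiniteMeasure μ]
    (hY : Measurable Y) {φ : S → H} {A : Set Ω} (hA : MeasurableSet A)
    (hcomp : μ[A.indicator (1 : Ω → ℝ) | MeasurableSpace.comap (φ ∘ Y) inferInstance]
      =ᵐ[μ] μ[A.indicator 1 | MeasurableSpace.comap Y inferInstance])
    {y y' : S} (hy : μ (Y ⁻¹' {y}) ≠ 0) (hy' : μ (Y ⁻¹' {y'}) ≠ 0) (hφ : φ y = φ y') :
    μ[|Y ⁻¹' {y}] A = μ[|Y ⁻¹' {y'}] A := by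
  have h := integral_cond_eq_of_condExp_comap_comp_ae_eq hY
    ((integrable_const 1).indicator hA) hcomp hy hy' hφ
  rwa [integral_indicator_one hA, integral_indicator_one hA,
    measureReal_eq_measureReal_iff] at h

lemma aestronglyMeasurable_comap_comp_of_ae_factorsThrough [Finite S] [MeasurableSingletonClass H]
    (hY : Measurable Y) {φ : S → H} {f : S → ℝ}
    (hf : ∀ y y', μ (Y ⁻¹' {y}) ≠ 0 → μ (Y ⁻¹' {y'}) ≠ 0 → φ y = φ y' → f y = f y') :
    AEStronglyMeasurable[MeasurableSpace.comap (φ ∘ Y) inferInstance] (f ∘ Y) μ := by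
  let P := {y | μ (Y ⁻¹' {y}) ≠ 0}
  have hfac : (fun y : P => f y).FactorsThrough fun y : P => φ y :=
    fun y y' h => hf y y' y.2 y'.2 h
  have hrange : (Set.range (φ ∘ Y)).Finite :=
    (Set.finite_range φ).subset (Set.range_comp_subset_range Y φ)
  refine ⟨Function.extend (fun y : P => φ y) (fun y : P => f y) 0 ∘ (φ ∘ Y),
    (measurable_comap_comp_of_finite_range hrange _).stronglyMeasurable, ?_⟩
  filter_upwards [ae_measure_preimage_singleton_ne_zero hY] with ω hω
  exact (hfac.extend_apply 0 ⟨Y ω, hω⟩).symm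

end CondExpFinite

theorem jtp_belief_states_k_observable_general
    {Ω 𝒳 H : Type*}
    [MeasurableSpace Ω] [MeasurableSpace 𝒳] [DiscreteMeasurableSpace 𝒳]
    [Fintype 𝒳]
    [MeasurableSpace H] [StandardBorelSpace H]
    (μ : Measure Ω) [IsProbabilityMeasure μ]
    (T : ℕ)
    (X : ℕ → Ω → 𝒳) (hX : ∀ t, Measurable (X t))
    (h : ℕ → Ω → H) (g : (t : ℕ) → (Fin t → 𝒳) → H)
    (hgh : ∀ t, 1 ≤ t → t ≤ T → ∀ ω, h t ω = g t (tup X 0 t ω))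
    (k : ℕ) (t : ℕ) (ht1 : 1 ≤ t) (htk : t + k ≤ T)
    -- the system is `k`-observable at time `t`
    (hobs : ∀ x x' : Fin t → 𝒳,
      0 < μ {ω | tup X 0 t ω = x} → 0 < μ {ω | tup X 0 t ω = x'} →
      (∀ w : Fin k → 𝒳,
        ProbabilityTheory.cond μ {ω | tup X 0 t ω = x} {ω | tup X t k ω = w} =
        ProbabilityTheory.cond μ {ω | tup X 0 t ω = x'} {ω | tup X t k ω = w}) →
      ∀ w' : Fin (T - t) → 𝒳,
        ProbabilityTheory.cond μ {ω | tup X 0 t ω = x} {ω | tup X t (T - t) ω = w'} =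
        ProbabilityTheory.cond μ {ω | tup X 0 t ω = x'} {ω | tup X t (T - t) ω = w'})
    -- conditioning on `h t` recovers the true joint next-`k` conditional
    (hjtp : ∀ w : Fin k → 𝒳,
      (μ[ind {ω | tup X t k ω = w} | MeasurableSpace.comap (h t) inferInstance])
        =ᵐ[μ]
      (μ[ind {ω | tup X t k ω = w} | MeasurableSpace.comap (tup X 0 t) inferInstance])) :
    -- conclusion: `h t` is a belief state for `X_{1:t}`
    ∀ f : (Fin (T - t) → 𝒳) → ℝ, Measurable f → (∃ C, ∀ y, |f y| ≤ C) →
      (μ[fun ω => f (tup X t (T - t) ω) | MeasurableSpace.comap (h t) inferInstance])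
        =ᵐ[μ]
      (μ[fun ω => f (tup X t (T - t) ω) |
          MeasurableSpace.comap (tup X 0 t) inferInstance]) := by
  intro f _ _
  set Y := tup X 0 t
  have hY : Measurable Y := measurable_pi_lambda _ fun _ => hX _
  have hnext : Measurable (tup X t k) := measurable_pi_lambda _ fun _ => hX _
  have hfuture : Measurable (tup X t (T - t)) := measurable_pi_lambda _ fun _ => hX _
  have hht : h t = g t ∘ Y := funext (hgh t ht1 (by omega))
  rw [hht] at hjtp ⊢
  have hsame : ∀ x x', μ (Y ⁻¹' {x}) ≠ 0 → μ (Y ⁻¹' {x'}) ≠ 0 → g t x = g t x' →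
      ∫ ω, f (tup X t (T - t) ω) ∂μ[|Y ⁻¹' {x}] =
        ∫ ω, f (tup X t (T - t) ω) ∂μ[|Y ⁻¹' {x'}] := by
    intro x x' hx hx' hgx
    have hlaw w := cond_eq_of_condExp_comap_comp_indicator_ae_eq hY
      (hnext (measurableSet_singleton w)) (hjtp w) hx hx' hgx
    exact integral_comp_eq_of_measure_preimage_singleton_eq hfuture
      (hobs x x' (pos_iff_ne_zero.2 hx) (pos_iff_ne_zero.2 hx') hlaw) f
  have hle : MeasurableSpace.comap (g t ∘ Y) inferInstance ≤
      MeasurableSpace.comap Y inferInstance :=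
    (Measurable.of_discrete.comp (comap_measurable Y)).comap_le
  refine condExp_ae_eq_condExp_of_le hle hY.comap_le ?_
  exact (aestronglyMeasurable_comap_comp_of_ae_factorsThrough hY hsame).congr
    (condExp_comap_ae_eq_integral_cond hY (integrable_comp_of_finite hfuture f)).symm

/-- If the system is `k`-observable at time `t` and the model conditioned
on `h t` recovers the true joint conditional distribution of the next `k` tokens, then
`h t` is a belief state for `X_{1:t}`. -/
theorem jtp_belief_states_k_observable
    {Ω 𝒳 H : Type*}
    [MeasurableSpace Ω] [MeasurableSpace 𝒳] [DiscreteMeasurableSpace 𝒳]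
    [Fintype 𝒳] [Nonempty 𝒳]
    [MeasurableSpace H] [StandardBorelSpace H]
    (μ : Measure Ω) [IsProbabilityMeasure μ]
    (T : ℕ) (hT : 2 ≤ T)
    (X : ℕ → Ω → 𝒳) (hX : ∀ t, Measurable (X t))
    (h : ℕ → Ω → H) (g : (t : ℕ) → (Fin t → 𝒳) → H)
    (hg : ∀ t, 1 ≤ t → t ≤ T → Measurable (g t))
    (hgh : ∀ t, 1 ≤ t → t ≤ T → ∀ ω, h t ω = g t (tup X 0 t ω))
    (k : ℕ) (hk : 1 ≤ k) (t : ℕ) (ht1 : 1 ≤ t) (htk : t + k ≤ T)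
    -- the system is `k`-observable at time `t`
    (hobs : ∀ x x' : Fin t → 𝒳,
      0 < μ {ω | tup X 0 t ω = x} → 0 < μ {ω | tup X 0 t ω = x'} →
      (∀ w : Fin k → 𝒳,
        ProbabilityTheory.cond μ {ω | tup X 0 t ω = x} {ω | tup X t k ω = w} =
        ProbabilityTheory.cond μ {ω | tup X 0 t ω = x'} {ω | tup X t k ω = w}) →
      ∀ w' : Fin (T - t) → 𝒳,
        ProbabilityTheory.cond μ {ω | tup X 0 t ω = x} {ω | tup X t (T - t) ω = w'} =
        ProbabilityTheory.cond μ {ω | tup X 0 t ω = x'} {ω | tup X t (T - t) ω = w'})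
    -- conditioning on `h t` recovers the true joint next-`k` conditional
    (hjtp : ∀ w : Fin k → 𝒳,
      (μ[ind {ω | tup X t k ω = w} | MeasurableSpace.comap (h t) inferInstance])
        =ᵐ[μ]
      (μ[ind {ω | tup X t k ω = w} | MeasurableSpace.comap (tup X 0 t) inferInstance])) :
    -- conclusion: `h t` is a belief state for `X_{1:t}`
    ∀ f : (Fin (T - t) → 𝒳) → ℝ, Measurable f → (∃ C, ∀ y, |f y| ≤ C) →
      (μ[fun ω => f (tup X t (T - t) ω) | MeasurableSpace.comap (h t) inferInstance])
        =ᵐ[μ]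
      (μ[fun ω => f (tup X t (T - t) ω) |
          MeasurableSpace.comap (tup X 0 t) inferInstance]) :=
  jtp_belief_states_k_observable_general μ T X hX h g hgh k t ht1 htk hobs hjtp
end
end
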